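/- arXiv:math/0106107 — 8 statements merged into one kernel-verified Lean document; each statement's English description precedes it below -/
import Mathlib

section
/- Let E be a Banach space over 𝕜, let 𝒜 be a standard subalgebra of B(E), and let B ∈ 𝒜. Then there exists A ∈ 𝒜 with A ≠ 0 and A ∘ B = 0 if and only if the closure of the range of B is not all of E. -/
set_option synthInstance.maxHeartbeats 400000
set_option maxHeartbeats 1000000

/-- A subalgebra of `B(E)` is *standard* if it contains every continuous finite-rank
operator (it contains the identity automatically, being a subalgebra). -/
def IsStandardSubalgebra (𝕜 : Type*) [RCLike 𝕜] {E : Type*} [NormedAddCommGroup E]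
    [NormedSpace 𝕜 E] (𝒜 : Subalgebra 𝕜 (E →L[𝕜] E)) : Prop :=
  ∀ A : E →L[𝕜] E, FiniteDimensional 𝕜 (LinearMap.range (A : E →ₗ[𝕜] E)) → A ∈ 𝒜

/-!
If `A * B = 0` then the closed subspace `ker A` contains the range of `B`, hence its closure, so
`A = 0` when that range is dense. Conversely, if the range of `B` is not dense, Hahn–Banach gives a
nonzero functional `f` vanishing on it, and the rank-one operator `y ↦ f y • x` with `f x ≠ 0`
lies in every standard subalgebra and annihilates `B` from the left.
-/

theorem ContinuousLinearMap.topologicalClosure_range_le_ker_iff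
    {R M N P : Type*} [Semiring R] [AddCommMonoid M] [Module R M] [TopologicalSpace M]
    [AddCommMonoid N] [Module R N] [TopologicalSpace N] [ContinuousAdd N] [ContinuousConstSMul R N]
    [AddCommMonoid P] [Module R P] [TopologicalSpace P] [T1Space P]
    (A : N →L[R] P) (B : M →L[R] N) :
    (LinearMap.range (B : M →ₗ[R] N)).topologicalClosure ≤ A.ker ↔ A.comp B = 0 := by
  rw [← coe_inj, toLinearMap_comp, toLinearMap_zero, ← LinearMap.range_le_ker_iff]
  exact ⟨(Submodule.le_topologicalClosure _).trans,
    fun h ↦ Submodule.topologicalClosure_minimal _ h A.isClosed_ker⟩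

theorem Submodule.exists_strongDual_ne_zero_le_ker_of_topologicalClosure_ne_top
    {𝕜 E : Type*} [RCLike 𝕜] [NormedAddCommGroup E] [NormedSpace 𝕜 E] {S : Submodule 𝕜 E}
    (hS : S.topologicalClosure ≠ ⊤) : ∃ f : StrongDual 𝕜 E, f ≠ 0 ∧ S ≤ f.ker := by
  obtain ⟨x, hx⟩ := SetLike.exists_not_mem_of_ne_top _ hS
  -- makes `E ⧸ S.topologicalClosure` a normed space, whose dual separates points
  have := S.isClosed_topologicalClosure
  have hπx : S.topologicalClosure.mkQL x ≠ 0 := by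
    simpa [Submodule.Quotient.mk_eq_zero] using hx
  obtain ⟨g, hg⟩ := SeparatingDual.exists_ne_zero (R := 𝕜) hπx
  refine ⟨g.comp S.topologicalClosure.mkQL, fun h ↦ hg (by simpa using congr($h x)), ?_⟩
  intro y hy
  simp [(Submodule.Quotient.mk_eq_zero _).2 (S.le_topologicalClosure hy)]

theorem IsStandardSubalgebra.smulRight_mem {𝕜 E : Type*} [RCLike 𝕜] [NormedAddCommGroup E]
    [NormedSpace 𝕜 E] {𝒜 : Subalgebra 𝕜 (E →L[𝕜] E)} (h𝒜 : IsStandardSubalgebra 𝕜 𝒜)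
    (f : StrongDual 𝕜 E) (x : E) : f.smulRight x ∈ 𝒜 :=
  h𝒜 _ <| Submodule.finiteDimensional_of_le (S₂ := Submodule.span 𝕜 {x}) <| by
    rintro _ ⟨y, rfl⟩
    exact Submodule.smul_mem _ _ (Submodule.mem_span_singleton_self x)

theorem exists_left_annihilator_iff_range_not_dense_general
    {𝕜 : Type*} [RCLike 𝕜]
    {E : Type*} [NormedAddCommGroup E] [NormedSpace 𝕜 E]
    (𝒜 : Subalgebra 𝕜 (E →L[𝕜] E)) (h𝒜 : IsStandardSubalgebra 𝕜 𝒜) (B : 𝒜) :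
    (∃ A : 𝒜, A ≠ 0 ∧ A * B = 0) ↔
      (LinearMap.range ((B : E →L[𝕜] E) : E →ₗ[𝕜] E)).topologicalClosure ≠ ⊤ := by
  constructor
  · rintro ⟨A, hA0, hAB⟩ hdense
    have hcomp : (A : E →L[𝕜] E).comp (B : E →L[𝕜] E) = 0 := congrArg Subtype.val hAB
    rw [← ContinuousLinearMap.topologicalClosure_range_le_ker_iff, hdense, top_le_iff,
      LinearMap.ker_eq_top] at hcomp
    exact hA0 (Subtype.ext (ContinuousLinearMap.coe_inj.1 hcomp))
  · intro hne
    obtain ⟨f, hf0, hle⟩ :=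
      Submodule.exists_strongDual_ne_zero_le_ker_of_topologicalClosure_ne_top hne
    obtain ⟨x, hx⟩ := DFunLike.ne_iff.1 hf0
    refine ⟨⟨f.smulRight x, h𝒜.smulRight_mem f x⟩, fun h ↦ ?_, ?_⟩
    · have hx0 : x ≠ 0 := by rintro rfl; simp at hx
      have hfx : f x • x = 0 := congr(($h : E →L[𝕜] E) x)
      exact hx ((smul_eq_zero.1 hfx).resolve_right hx0)
    · ext y
      have hfBy : f ((B : E →L[𝕜] E) y) = 0 := hle ⟨y, rfl⟩
      simp [hfBy]

theorem exists_left_annihilator_iff_range_not_dense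
    {𝕜 : Type*} [RCLike 𝕜]
    {E : Type*} [NormedAddCommGroup E] [NormedSpace 𝕜 E] [CompleteSpace E]
    (𝒜 : Subalgebra 𝕜 (E →L[𝕜] E)) (h𝒜 : IsStandardSubalgebra 𝕜 𝒜) (B : 𝒜) :
    (∃ A : 𝒜, A ≠ 0 ∧ A * B = 0) ↔
      (LinearMap.range ((B : E →L[𝕜] E) : E →ₗ[𝕜] E)).topologicalClosure ≠ ⊤ :=
  exists_left_annihilator_iff_range_not_dense_general 𝒜 h𝒜 B
end

section
/- Let E be a Banach space over 𝕜, let 𝒜 be a standard subalgebra of B(E), and let B ∈ 𝒜. Define B⊥ = {A ∈ 𝒜 : A ≠ 0 and A ∘ B = 0}. Then B⊥ is nonempty and every element of B⊥ has rank one if and only if the closure of the range of B is a closed subspace of codimension one in E. -/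
set_option synthInstance.maxHeartbeats 400000
set_option maxHeartbeats 1000000

/-!
Write `R` for the closure of the range of `B`; then `A * B = 0` exactly when `A` vanishes on `R`.
If `E ⧸ R` is a line, every operator vanishing on `R` factors through it and so has rank at most
one, and a Hahn–Banach functional `f` with `R ≤ ker f` gives the rank-one annihilator
`f.smulRight x`. Conversely, if `R ≠ ⊤` but `ker f ≠ R` for such an `f`, a second functional `g`
vanishing on `R` but not on some `w ∈ ker f` yields the finite-rank annihilator
`f.smulRight x + g.smulRight w` of rank two; hence `R = ker f` has codimension one.
-/

open Module Submodule

section LinearAlgebra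

variable {K M N : Type*} [DivisionRing K] [AddCommGroup M] [Module K M] [AddCommGroup N]
  [Module K N]

theorem LinearMap.finrank_range_eq_one_of_le_ker {p : Submodule K M}
    (hp : finrank K (M ⧸ p) = 1) {A : M →ₗ[K] N} (hA : A ≠ 0) (hker : p ≤ LinearMap.ker A) :
    finrank K (LinearMap.range A) = 1 := by
  have : FiniteDimensional K (M ⧸ p) := .of_finrank_pos (by omega)
  rw [Ne, ← LinearMap.range_eq_bot, ← p.range_liftQ A hker, ← Submodule.finrank_eq_zero] at hA
  rw [← p.range_liftQ A hker]
  have hle := (p.liftQ A hker).finrank_range_le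
  omega

theorem finrank_span_pair {x y : M} (h : LinearIndependent K ![x, y]) :
    finrank K (span K {x, y}) = 2 := by
  have := finrank_span_eq_card h
  rwa [Matrix.range_cons_cons_empty, Fintype.card_fin] at this

end LinearAlgebra

section NormedSpace

variable {𝕜 E : Type*} [RCLike 𝕜] [NormedAddCommGroup E] [NormedSpace 𝕜 E]

theorem exists_dual_eq_one_of_notMem {p : Submodule 𝕜 E} (hp : IsClosed (p : Set E)) {x : E}
    (hx : x ∉ p) : ∃ f : E →L[𝕜] 𝕜, p ≤ LinearMap.ker (f : E →ₗ[𝕜] 𝕜) ∧ f x = 1 := by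
  -- `E ⧸ p` is then a normed space, so its dual separates points.
  have := hp
  obtain ⟨φ, hφ⟩ := SeparatingDual.exists_eq_one (R := 𝕜)
    (x := (Submodule.Quotient.mk x : E ⧸ p)) (by simpa using hx)
  exact ⟨φ ∘L p.mkQL, fun y hy => by simp [(Submodule.Quotient.mk_eq_zero p).2 hy], hφ⟩

theorem exists_ne_zero_finiteDimensional_range_le_ker {p : Submodule 𝕜 E}
    (hp : IsClosed (p : Set E)) (hne : p ≠ ⊤) :
    ∃ A : E →L[𝕜] E, FiniteDimensional 𝕜 (LinearMap.range (A : E →ₗ[𝕜] E)) ∧ A ≠ 0 ∧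
      p ≤ LinearMap.ker (A : E →ₗ[𝕜] E) := by
  obtain ⟨x, -, hx⟩ := SetLike.exists_of_lt hne.lt_top
  obtain ⟨f, hpf, hfx⟩ := exists_dual_eq_one_of_notMem hp hx
  have hf : f ≠ 0 := by rintro rfl; simp at hfx
  refine ⟨f.smulRight x, ?_, ?_, fun y hy => by simp [LinearMap.mem_ker.1 (hpf hy)]⟩
  · rw [ContinuousLinearMap.range_smulRight_apply hf]
    infer_instance
  · intro h
    have hx0 : x = 0 := by simpa [hfx] using congrArg (· x) h
    exact hx (hx0 ▸ p.zero_mem)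

theorem range_smulRight_add_smulRight {f g : E →L[𝕜] 𝕜} {x w : E} (hfx : f x = 1)
    (hfw : f w = 0) (hgw : g w = 1) :
    LinearMap.range (↑(f.smulRight x + g.smulRight w) : E →ₗ[𝕜] E) = span 𝕜 {x, w} := by
  set A := f.smulRight x + g.smulRight w
  have hAw : A w = w := by simp [A, hfw, hgw]
  have hAx : A x - g x • w = x := by simp [A, hfx]
  apply le_antisymm
  · rintro _ ⟨y, rfl⟩
    exact add_mem (smul_mem _ _ (subset_span (by simp))) (smul_mem _ _ (subset_span (by simp)))
  · rw [span_le]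
    rintro _ (rfl | rfl)
    · rw [← hAx]
      exact sub_mem (LinearMap.mem_range_self _ _)
        (smul_mem _ _ (hAw ▸ LinearMap.mem_range_self _ _))
    · exact hAw ▸ LinearMap.mem_range_self _ _

theorem linearIndependent_pair_of_dual {f g : E →L[𝕜] 𝕜} {x w : E} (hfx : f x = 1)
    (hfw : f w = 0) (hgw : g w = 1) : LinearIndependent 𝕜 ![x, w] := by
  refine LinearIndependent.pair_iff.2 fun s t hst => ?_
  have hs : s = 0 := by simpa [hfx, hfw] using congrArg f hst
  subst hs
  exact ⟨rfl, by simpa [hgw] using congrArg g hst⟩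

theorem finrank_range_smulRight_add_smulRight {f g : E →L[𝕜] 𝕜} {x w : E} (hfx : f x = 1)
    (hfw : f w = 0) (hgw : g w = 1) :
    finrank 𝕜 (LinearMap.range (↑(f.smulRight x + g.smulRight w) : E →ₗ[𝕜] E)) = 2 := by
  rw [range_smulRight_add_smulRight hfx hfw hgw]
  exact finrank_span_pair (linearIndependent_pair_of_dual hfx hfw hgw)

theorem finrank_quotient_eq_one_of_forall_finrank_range_eq_one {p : Submodule 𝕜 E}
    (hp : IsClosed (p : Set E)) (hne : p ≠ ⊤)
    (h : ∀ A : E →L[𝕜] E, FiniteDimensional 𝕜 (LinearMap.range (A : E →ₗ[𝕜] E)) → A ≠ 0 →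
      p ≤ LinearMap.ker (A : E →ₗ[𝕜] E) → finrank 𝕜 (LinearMap.range (A : E →ₗ[𝕜] E)) = 1) :
    finrank 𝕜 (E ⧸ p) = 1 := by
  obtain ⟨x, -, hx⟩ := SetLike.exists_of_lt hne.lt_top
  obtain ⟨f, hpf, hfx⟩ := exists_dual_eq_one_of_notMem hp hx
  have hker : LinearMap.ker (f : E →ₗ[𝕜] 𝕜) = p := by
    refine le_antisymm (fun w hfw => ?_) hpf
    -- otherwise `f.smulRight x + g.smulRight w` is an annihilator of `p` of rank two
    by_contra hw
    obtain ⟨g, hpg, hgw⟩ := exists_dual_eq_one_of_notMem hp hw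
    have h2 := finrank_range_smulRight_add_smulRight hfx hfw hgw
    have hA : f.smulRight x + g.smulRight w ≠ 0 := by
      rintro hA
      rw [hA, ContinuousLinearMap.toLinearMap_zero, LinearMap.range_zero, finrank_bot] at h2
      omega
    have hpA : p ≤ LinearMap.ker (↑(f.smulRight x + g.smulRight w) : E →ₗ[𝕜] E) :=
      fun y hy => by simp [LinearMap.mem_ker.1 (hpf hy), LinearMap.mem_ker.1 (hpg hy)]
    have hfin := Module.finite_of_finrank_eq_succ h2
    have h1 := h _ hfin hA hpA
    omega
  have hf : (f : E →ₗ[𝕜] 𝕜) ≠ 0 := fun hf => by simpa [hfx] using LinearMap.congr_fun hf x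
  rw [← hker, (LinearMap.quotKerEquivOfSurjective _ (LinearMap.surjective hf)).finrank_eq,
    finrank_self]

end NormedSpace

theorem ContinuousLinearMap.comp_eq_zero_iff_topologicalClosure_range_le_ker {R E F G : Type*}
    [Ring R] [TopologicalSpace E] [AddCommGroup E] [Module R E] [TopologicalSpace F]
    [AddCommGroup F] [Module R F] [ContinuousAdd F] [ContinuousConstSMul R F]
    [TopologicalSpace G] [AddCommGroup G] [Module R G] [T1Space G] {A : F →L[R] G}
    {B : E →L[R] F} :
    A ∘L B = 0 ↔
      (LinearMap.range (B : E →ₗ[R] F)).topologicalClosure ≤ LinearMap.ker (A : F →ₗ[R] G) := by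
  constructor
  · intro h
    refine topologicalClosure_minimal _ ?_ A.isClosed_ker
    rintro _ ⟨x, rfl⟩
    exact congr($h x)
  · intro h
    ext x
    exact h (le_topologicalClosure _ ⟨x, rfl⟩)

theorem annihilator_rank_one_iff_range_codimension_one_general
    {𝕜 : Type*} [RCLike 𝕜]
    {E : Type*} [NormedAddCommGroup E] [NormedSpace 𝕜 E]
    (𝒜 : Subalgebra 𝕜 (E →L[𝕜] E)) (h𝒜 : IsStandardSubalgebra 𝕜 𝒜) (B : 𝒜) :
    (((({A : 𝒜 | A ≠ 0 ∧ A * B = 0}).Nonempty) ∧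
        ∀ A : 𝒜, A ≠ 0 ∧ A * B = 0 →
          Module.finrank 𝕜 (LinearMap.range ((A : E →L[𝕜] E) : E →ₗ[𝕜] E)) = 1)) ↔
      Module.finrank 𝕜
        (E ⧸ (LinearMap.range ((B : E →L[𝕜] E) : E →ₗ[𝕜] E)).topologicalClosure) = 1 := by
  set R := (LinearMap.range ((B : E →L[𝕜] E) : E →ₗ[𝕜] E)).topologicalClosure
  have hR : IsClosed (R : Set E) := isClosed_topologicalClosure _
  have hann (A : 𝒜) : A * B = 0 ↔ R ≤ LinearMap.ker ((A : E →L[𝕜] E) : E →ₗ[𝕜] E) :=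
    Subtype.ext_iff.trans ContinuousLinearMap.comp_eq_zero_iff_topologicalClosure_range_le_ker
  have hne (A : 𝒜) : A ≠ 0 ↔ (A : E →L[𝕜] E) ≠ 0 := ZeroMemClass.coe_eq_zero.not.symm
  constructor
  · rintro ⟨⟨A₀, hA₀, hA₀B⟩, hrank⟩
    have hRne : R ≠ ⊤ := by
      intro hRtop
      have hker := (hann A₀).1 hA₀B
      rw [hRtop, top_le_iff, LinearMap.ker_eq_top] at hker
      exact (hne A₀).1 hA₀ (ContinuousLinearMap.coe_injective hker)
    exact finrank_quotient_eq_one_of_forall_finrank_range_eq_one hR hRne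
      fun A hfin hA hker => hrank ⟨A, h𝒜 A hfin⟩ ⟨(hne _).2 hA, (hann _).2 hker⟩
  · intro hcod
    have hRne : R ≠ ⊤ := Submodule.Quotient.nontrivial_iff.1 (nontrivial_of_finrank_eq_succ hcod)
    obtain ⟨A, hfin, hA, hker⟩ := exists_ne_zero_finiteDimensional_range_le_ker hR hRne
    exact ⟨⟨⟨A, h𝒜 A hfin⟩, (hne _).2 hA, (hann _).2 hker⟩, fun C ⟨hC, hCB⟩ =>
      LinearMap.finrank_range_eq_one_of_le_ker hcod
        (fun h => (hne C).1 hC (ContinuousLinearMap.coe_injective h)) ((hann C).1 hCB)⟩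

theorem annihilator_rank_one_iff_range_codimension_one
    {𝕜 : Type*} [RCLike 𝕜]
    {E : Type*} [NormedAddCommGroup E] [NormedSpace 𝕜 E] [CompleteSpace E]
    (𝒜 : Subalgebra 𝕜 (E →L[𝕜] E)) (h𝒜 : IsStandardSubalgebra 𝕜 𝒜) (B : 𝒜) :
    (((({A : 𝒜 | A ≠ 0 ∧ A * B = 0}).Nonempty) ∧
        ∀ A : 𝒜, A ≠ 0 ∧ A * B = 0 →
          Module.finrank 𝕜 (LinearMap.range ((A : E →L[𝕜] E) : E →ₗ[𝕜] E)) = 1)) ↔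
      Module.finrank 𝕜
        (E ⧸ (LinearMap.range ((B : E →L[𝕜] E) : E →ₗ[𝕜] E)).topologicalClosure) = 1 :=
  annihilator_rank_one_iff_range_codimension_one_general 𝒜 h𝒜 B
end

section
/- Let E be a Banach space over 𝕜 and let 𝒜 be a standard subalgebra of B(E). For B ∈ 𝒜 write B⊥ = {D ∈ 𝒜 : D ≠ 0 and D ∘ B = 0}. Then a nonzero operator A ∈ 𝒜 has rank one if and only if there exists B ∈ 𝒜 such that A ∈ B⊥ and there is no C ∈ 𝒜 with C⊥ nonempty and C⊥ a proper subset of B⊥. -/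
/-!
Write `x ⊗ f` for `f.smulRight x : e ↦ f e • x`. For a functional `f` and a vector `x` with
`f x = 1`, the operator `P = x ⊗ f` is a rank-one idempotent, and the left annihilator of `1 - P`
consists exactly of the operators `D = (D x) ⊗ f`. Such an annihilator is minimal: if some nonzero
`D = (D x) ⊗ f` kills `C`, then `f ∘ C = 0`, so every operator of this form kills `C`. A rank-one
`A = y ⊗ f` lies in the annihilator of `1 - x ⊗ f` once `f x = 1`. Conversely, if `A B = 0` with
`B` minimal, pick `v` with `A v ≠ 0`, a functional `g` with `g (A v) = 1`, and put `f = g ∘ A`;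
then `f ∘ B = 0`, so the annihilator of `1 - v ⊗ f` lies inside that of `B`, minimality forces
equality, and `A` lying in it means `A = (A v) ⊗ f`.
-/

set_option synthInstance.maxHeartbeats 400000
set_option maxHeartbeats 1000000

def nonzeroLeftAnnihilator {R : Type*} [Mul R] [Zero R] (b : R) : Set R :=
  {d | d ≠ 0 ∧ d * b = 0}

theorem Subalgebra.mul_eq_zero_iff_coe {R A : Type*} [CommSemiring R] [Semiring A] [Algebra R A]
    {S : Subalgebra R A} {a b : S} : a * b = 0 ↔ (a : A) * b = 0 := by
  rw [← ZeroMemClass.coe_eq_zero, Subalgebra.coe_mul]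

namespace ContinuousLinearMap

variable {𝕜 E : Type*} [NontriviallyNormedField 𝕜] [NormedAddCommGroup E] [NormedSpace 𝕜 E]

theorem mul_smulRight (D : E →L[𝕜] E) (f : StrongDual 𝕜 E) (x : E) :
    D * f.smulRight x = f.smulRight (D x) := by
  ext; simp

theorem mul_one_sub_smulRight_eq_zero_iff {D : E →L[𝕜] E} {f : StrongDual 𝕜 E} {x : E} :
    D * (1 - f.smulRight x) = 0 ↔ D = f.smulRight (D x) := by
  rw [mul_sub, mul_one, mul_smulRight, sub_eq_zero]

theorem smulRight_mul (f : StrongDual 𝕜 E) (y : E) (B : E →L[𝕜] E) :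
    f.smulRight y * B = (f ∘L B).smulRight y := by
  ext; simp

theorem smulRight_eq_zero_iff {f : StrongDual 𝕜 E} {y : E} :
    f.smulRight y = 0 ↔ f = 0 ∨ y = 0 := by
  refine ⟨fun h ↦ or_iff_not_imp_right.mpr fun hy ↦ ?_, ?_⟩
  · ext e
    simpa [hy] using congr($h e)
  · rintro (rfl | rfl) <;> simp

theorem exists_comp_apply_eq_one [SeparatingDual 𝕜 E] {A : E →L[𝕜] E} (hA : A ≠ 0) :
    ∃ (v : E) (g : StrongDual 𝕜 E), g (A v) = 1 := by
  obtain ⟨v, hv⟩ := DFunLike.ne_iff.mp hA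
  exact ⟨v, SeparatingDual.exists_eq_one hv⟩

theorem eq_smulRight_of_finrank_range_eq_one {A : E →L[𝕜] E}
    (hA : Module.finrank 𝕜 (LinearMap.range (A : E →ₗ[𝕜] E)) = 1) {v : E} {g : StrongDual 𝕜 E}
    (hg : g (A v) = 1) : A = (g ∘L A).smulRight (A v) := by
  have hAv : (⟨A v, v, rfl⟩ : LinearMap.range (A : E →ₗ[𝕜] E)) ≠ 0 := by
    rintro h
    simp_all [Subtype.ext_iff]
  ext e
  obtain ⟨c, hc⟩ := (finrank_eq_one_iff_of_nonzero' _ hAv).mp hA ⟨A e, e, rfl⟩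
  have hAe : A e = c • A v := (congrArg Subtype.val hc).symm
  simp [hAe, hg]

theorem finrank_range_eq_one_of_eq_smulRight {A : E →L[𝕜] E} (hA : A ≠ 0) {f : StrongDual 𝕜 E}
    {y : E} (h : A = f.smulRight y) : Module.finrank 𝕜 (LinearMap.range (A : E →ₗ[𝕜] E)) = 1 := by
  obtain ⟨hf, hy⟩ := not_or.mp (smulRight_eq_zero_iff.not.mp (h ▸ hA))
  rw [h, range_smulRight_apply hf, finrank_span_singleton hy]

end ContinuousLinearMap

open ContinuousLinearMap

section Annihilator

variable {𝕜 E : Type*} [NontriviallyNormedField 𝕜] [NormedAddCommGroup E] [NormedSpace 𝕜 E]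
  {𝒜 : Subalgebra 𝕜 (E →L[𝕜] E)} {Q : 𝒜} {f : StrongDual 𝕜 E} {x : E}

theorem mem_nonzeroLeftAnnihilator_iff (hQ : (Q : E →L[𝕜] E) = 1 - f.smulRight x) {D : 𝒜} :
    D ∈ nonzeroLeftAnnihilator Q ↔ D ≠ 0 ∧ (D : E →L[𝕜] E) = f.smulRight ((D : E →L[𝕜] E) x) := by
  rw [nonzeroLeftAnnihilator, Set.mem_ofPred_eq, Subalgebra.mul_eq_zero_iff_coe, hQ,
    mul_one_sub_smulRight_eq_zero_iff]

theorem nonzeroLeftAnnihilator_subset (hQ : (Q : E →L[𝕜] E) = 1 - f.smulRight x) {B : 𝒜}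
    (hB : f ∘L (B : E →L[𝕜] E) = 0) :
    nonzeroLeftAnnihilator Q ⊆ nonzeroLeftAnnihilator B := by
  intro D hD
  obtain ⟨hD0, hDf⟩ := (mem_nonzeroLeftAnnihilator_iff hQ).mp hD
  refine ⟨hD0, Subalgebra.mul_eq_zero_iff_coe.mpr ?_⟩
  rw [hDf, smulRight_mul, hB, zero_smulRight]

theorem comp_eq_zero_of_mem_nonzeroLeftAnnihilator (hQ : (Q : E →L[𝕜] E) = 1 - f.smulRight x)
    {C D : 𝒜} (hD : D ∈ nonzeroLeftAnnihilator Q) (hDC : D * C = 0) :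
    f ∘L (C : E →L[𝕜] E) = 0 := by
  obtain ⟨hD0, hDf⟩ := (mem_nonzeroLeftAnnihilator_iff hQ).mp hD
  have hDx : (D : E →L[𝕜] E) x ≠ 0 := by
    intro h
    rw [h, smulRight_zero, ZeroMemClass.coe_eq_zero] at hDf
    exact hD0 hDf
  have := Subalgebra.mul_eq_zero_iff_coe.mp hDC
  rw [hDf, smulRight_mul, smulRight_eq_zero_iff] at this
  exact this.resolve_right hDx

theorem not_exists_nonzeroLeftAnnihilator_ssubset (hQ : (Q : E →L[𝕜] E) = 1 - f.smulRight x) :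
    ¬∃ C : 𝒜, (nonzeroLeftAnnihilator C).Nonempty ∧
      nonzeroLeftAnnihilator C ⊂ nonzeroLeftAnnihilator Q := by
  rintro ⟨C, ⟨D, hDC⟩, hCQ⟩
  have hfC := comp_eq_zero_of_mem_nonzeroLeftAnnihilator hQ (hCQ.subset hDC) hDC.2
  exact hCQ.not_subset (nonzeroLeftAnnihilator_subset hQ hfC)

end Annihilator

namespace IsStandardSubalgebra

variable {𝕜 E : Type*} [RCLike 𝕜] [NormedAddCommGroup E] [NormedSpace 𝕜 E]
  {𝒜 : Subalgebra 𝕜 (E →L[𝕜] E)}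

theorem smulRight_mem_s4 (h𝒜 : IsStandardSubalgebra 𝕜 𝒜) (f : StrongDual 𝕜 E) (x : E) :
    f.smulRight x ∈ 𝒜 := by
  apply h𝒜
  refine Submodule.finiteDimensional_of_le (S₂ := 𝕜 ∙ x) ?_
  rintro _ ⟨e, rfl⟩
  exact Submodule.smul_mem _ _ (Submodule.mem_span_singleton_self x)

theorem one_sub_smulRight_mem (h𝒜 : IsStandardSubalgebra 𝕜 𝒜) (f : StrongDual 𝕜 E) (x : E) :
    1 - f.smulRight x ∈ 𝒜 :=
  𝒜.sub_mem 𝒜.one_mem (h𝒜.smulRight_mem_s4 f x)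

theorem nonzeroLeftAnnihilator_nonempty (h𝒜 : IsStandardSubalgebra 𝕜 𝒜) {Q : 𝒜}
    {f : StrongDual 𝕜 E} {x : E} (hQ : (Q : E →L[𝕜] E) = 1 - f.smulRight x) (hfx : f x = 1) :
    (nonzeroLeftAnnihilator Q).Nonempty := by
  refine ⟨⟨f.smulRight x, h𝒜.smulRight_mem_s4 f x⟩, (mem_nonzeroLeftAnnihilator_iff hQ).mpr ⟨?_, ?_⟩⟩
  · intro h
    have := congr($(congrArg Subtype.val h) x)
    simp_all
  · simp [hfx]

end IsStandardSubalgebra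

theorem rank_one_iff_mem_minimal_annihilator_general
    {𝕜 : Type*} [RCLike 𝕜]
    {E : Type*} [NormedAddCommGroup E] [NormedSpace 𝕜 E]
    (𝒜 : Subalgebra 𝕜 (E →L[𝕜] E)) (h𝒜 : IsStandardSubalgebra 𝕜 𝒜)
    (perp : 𝒜 → Set 𝒜) (hperp : ∀ B, perp B = {D : 𝒜 | D ≠ 0 ∧ D * B = 0})
    (A : 𝒜) :
    Module.finrank 𝕜 (LinearMap.range ((A : E →L[𝕜] E) : E →ₗ[𝕜] E)) = 1 ↔
      ∃ B : 𝒜, A ∈ perp B ∧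
        ¬∃ C : 𝒜, (perp C).Nonempty ∧ perp C ⊂ perp B := by
  obtain rfl : perp = nonzeroLeftAnnihilator := funext hperp
  constructor
  · intro hrank
    have hA : A ≠ 0 := by
      rintro rfl
      rw [ZeroMemClass.coe_zero, toLinearMap_zero, LinearMap.range_zero, finrank_bot] at hrank
      exact zero_ne_one hrank
    obtain ⟨v, g, hg⟩ := exists_comp_apply_eq_one (ZeroMemClass.coe_eq_zero.not.mpr hA)
    let Q : 𝒜 := ⟨_, h𝒜.one_sub_smulRight_mem (g ∘L A) v⟩
    exact ⟨Q, (mem_nonzeroLeftAnnihilator_iff rfl).mpr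
      ⟨hA, eq_smulRight_of_finrank_range_eq_one hrank hg⟩,
      not_exists_nonzeroLeftAnnihilator_ssubset rfl⟩
  · rintro ⟨B, hAB, hmin⟩
    have hA : (A : E →L[𝕜] E) ≠ 0 := ZeroMemClass.coe_eq_zero.not.mpr hAB.1
    obtain ⟨v, g, hg⟩ := exists_comp_apply_eq_one hA
    let Q : 𝒜 := ⟨_, h𝒜.one_sub_smulRight_mem (g ∘L A) v⟩
    have hQB : nonzeroLeftAnnihilator Q ⊆ nonzeroLeftAnnihilator B :=
      nonzeroLeftAnnihilator_subset rfl <| by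
        rw [comp_assoc, ← mul_def, Subalgebra.mul_eq_zero_iff_coe.mp hAB.2, comp_zero]
    have hQ : nonzeroLeftAnnihilator Q = nonzeroLeftAnnihilator B := by
      by_contra hne
      exact hmin ⟨Q, h𝒜.nonzeroLeftAnnihilator_nonempty rfl hg, hQB.ssubset_of_ne hne⟩
    obtain ⟨-, hAf⟩ := (mem_nonzeroLeftAnnihilator_iff rfl).mp (hQ ▸ hAB)
    exact finrank_range_eq_one_of_eq_smulRight hA hAf

theorem rank_one_iff_mem_minimal_annihilator
    {𝕜 : Type*} [RCLike 𝕜]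
    {E : Type*} [NormedAddCommGroup E] [NormedSpace 𝕜 E] [CompleteSpace E]
    (𝒜 : Subalgebra 𝕜 (E →L[𝕜] E)) (h𝒜 : IsStandardSubalgebra 𝕜 𝒜)
    (perp : 𝒜 → Set 𝒜) (hperp : ∀ B, perp B = {D : 𝒜 | D ≠ 0 ∧ D * B = 0})
    (A : 𝒜) (hA : A ≠ 0) :
    Module.finrank 𝕜 (LinearMap.range ((A : E →L[𝕜] E) : E →ₗ[𝕜] E)) = 1 ↔
      ∃ B : 𝒜, A ∈ perp B ∧
        ¬∃ C : 𝒜, (perp C).Nonempty ∧ perp C ⊂ perp B :=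
  rank_one_iff_mem_minimal_annihilator_general 𝒜 h𝒜 perp hperp A
end

section
/- Let E₁ and E₂ be Banach spaces over 𝕜, let 𝒜₁ ⊆ B(E₁) and 𝒜₂ ⊆ B(E₂) be standard subalgebras, and let T : 𝒜₁ → 𝒜₂ be a biseparating linear bijection. Suppose S : E₁ → E₂ and Ψ : E₁* → E₂* are (plain) linear bijections satisfying T(e ⊗ e*) = S(e) ⊗ Ψ(e*) for all e ∈ E₁ and e* ∈ E₁*. Then for all e ∈ E₁ and e* ∈ E₁*: e*(e) = 0 if and only if (Ψ(e*))(S(e)) = 0; in particular, ker(Ψ(e*) ∘ S) = ker e* and ker Ψ(e*) = S(ker e*) for every e* ∈ E₁*. -/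
set_option synthInstance.maxHeartbeats 400000
set_option maxHeartbeats 1000000

/-- The rank-one operator `e ⊗ e*` sending `e'` to `e*(e') • e`. -/
noncomputable def rankOne {𝕜 : Type*} [RCLike 𝕜] {E : Type*} [NormedAddCommGroup E]
    [NormedSpace 𝕜 E] (e : E) (f : E →L[𝕜] 𝕜) : E →L[𝕜] E :=
  f.smulRight e

/-!
The rank-one operator `e ⊗ e*` satisfies `(e ⊗ e*)² = e*(e) • (e ⊗ e*)`, so it is square-zero
exactly when `e*(e) = 0`. A biseparating map preserves square-zero elements in both directions,
and `T(e ⊗ e*) = S e ⊗ Ψ e*`, hence `e*(e) = 0 ↔ (Ψ e*)(S e) = 0`. The kernel identities follow,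
the second one using the surjectivity of `S`.
-/

section RankOne

variable {𝕜 : Type*} [RCLike 𝕜] {E : Type*} [NormedAddCommGroup E] [NormedSpace 𝕜 E]

lemma rankOne_apply (e : E) (f : E →L[𝕜] 𝕜) (x : E) : rankOne e f x = f x • e := rfl

lemma rankOne_mul_rankOne (e e' : E) (f f' : E →L[𝕜] 𝕜) :
    rankOne e f * rankOne e' f' = f e' • rankOne e f' := by
  ext x
  simp [rankOne_apply, smul_smul, mul_comm]

lemma rankOne_mul_self_eq_zero_iff (e : E) (f : E →L[𝕜] 𝕜) :
    rankOne e f * rankOne e f = 0 ↔ f e = 0 := by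
  refine ⟨fun h => ?_, fun h => by rw [rankOne_mul_rankOne, h, zero_smul]⟩
  have hee : f e • f e • e = 0 := by
    simpa [rankOne_mul_rankOne, rankOne_apply] using DFunLike.congr_fun h e
  rw [smul_smul, smul_eq_zero, mul_self_eq_zero] at hee
  rcases hee with hfe | rfl
  · exact hfe
  · exact map_zero f

lemma IsStandardSubalgebra.rankOne_mem {𝒜 : Subalgebra 𝕜 (E →L[𝕜] E)}
    (h𝒜 : IsStandardSubalgebra 𝕜 𝒜) (e : E) (f : E →L[𝕜] 𝕜) : rankOne e f ∈ 𝒜 := by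
  apply h𝒜
  have hrange : LinearMap.range ((rankOne e f : E →L[𝕜] E) : E →ₗ[𝕜] E) ≤ 𝕜 ∙ e := by
    rintro y ⟨x, rfl⟩
    exact Submodule.mem_span_singleton.2 ⟨f x, rfl⟩
  exact Submodule.finiteDimensional_of_le hrange

end RankOne

theorem kernel_identities_of_biseparating_general
    {𝕜 : Type*} [RCLike 𝕜]
    {E₁ E₂ : Type*} [NormedAddCommGroup E₁] [NormedSpace 𝕜 E₁]
    [NormedAddCommGroup E₂] [NormedSpace 𝕜 E₂]
    (𝒜₁ : Subalgebra 𝕜 (E₁ →L[𝕜] E₁)) (𝒜₂ : Subalgebra 𝕜 (E₂ →L[𝕜] E₂))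
    (h𝒜₁ : IsStandardSubalgebra 𝕜 𝒜₁)
    (T : 𝒜₁ →ₗ[𝕜] 𝒜₂)
    (hsep : ∀ a b : 𝒜₁, a * b = 0 → T a * T b = 0)
    (hsep' : ∀ a b : 𝒜₁, T a * T b = 0 → a * b = 0)
    (S : E₁ →ₗ[𝕜] E₂) (Ψ : (E₁ →L[𝕜] 𝕜) →ₗ[𝕜] (E₂ →L[𝕜] 𝕜))
    (hS : Function.Bijective S)
    (hrep : ∀ (e : E₁) (f : E₁ →L[𝕜] 𝕜) (h : rankOne e f ∈ 𝒜₁),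
      ((T ⟨rankOne e f, h⟩ : E₂ →L[𝕜] E₂)) = rankOne (S e) (Ψ f)) :
    (∀ (e : E₁) (f : E₁ →L[𝕜] 𝕜), f e = 0 ↔ Ψ f (S e) = 0) ∧
      (∀ f : E₁ →L[𝕜] 𝕜,
        LinearMap.ker (((Ψ f : E₂ →L[𝕜] 𝕜) : E₂ →ₗ[𝕜] 𝕜) ∘ₗ S) = LinearMap.ker (f : E₁ →ₗ[𝕜] 𝕜)) ∧
      (∀ f : E₁ →L[𝕜] 𝕜,
        LinearMap.ker ((Ψ f : E₂ →L[𝕜] 𝕜) : E₂ →ₗ[𝕜] 𝕜) = (LinearMap.ker (f : E₁ →ₗ[𝕜] 𝕜)).map S) := by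
  have zero_iff (e : E₁) (f : E₁ →L[𝕜] 𝕜) : f e = 0 ↔ Ψ f (S e) = 0 := by
    set a : 𝒜₁ := ⟨rankOne e f, h𝒜₁.rankOne_mem e f⟩
    have hTa : ((T a * T a : 𝒜₂) : E₂ →L[𝕜] E₂) = rankOne (S e) (Ψ f) * rankOne (S e) (Ψ f) := by
      rw [Subalgebra.coe_mul, hrep]
    rw [← rankOne_mul_self_eq_zero_iff, ← rankOne_mul_self_eq_zero_iff, ← hTa,
      ZeroMemClass.coe_eq_zero]
    exact ⟨fun h => hsep a a (Subtype.ext h), fun h => congrArg Subtype.val (hsep' a a h)⟩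
  have ker_comp (f : E₁ →L[𝕜] 𝕜) :
      LinearMap.ker (((Ψ f : E₂ →L[𝕜] 𝕜) : E₂ →ₗ[𝕜] 𝕜) ∘ₗ S) = LinearMap.ker (f : E₁ →ₗ[𝕜] 𝕜) := by
    ext x
    exact (zero_iff x f).symm
  refine ⟨zero_iff, ker_comp, fun f => ?_⟩
  rw [← ker_comp, LinearMap.ker_comp, Submodule.map_comap_eq_of_surjective hS.2]

theorem kernel_identities_of_biseparating
    {𝕜 : Type*} [RCLike 𝕜]
    {E₁ E₂ : Type*} [NormedAddCommGroup E₁] [NormedSpace 𝕜 E₁] [CompleteSpace E₁]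
    [NormedAddCommGroup E₂] [NormedSpace 𝕜 E₂] [CompleteSpace E₂]
    (𝒜₁ : Subalgebra 𝕜 (E₁ →L[𝕜] E₁)) (𝒜₂ : Subalgebra 𝕜 (E₂ →L[𝕜] E₂))
    (h𝒜₁ : IsStandardSubalgebra 𝕜 𝒜₁) (h𝒜₂ : IsStandardSubalgebra 𝕜 𝒜₂)
    (T : 𝒜₁ →ₗ[𝕜] 𝒜₂) (hbij : Function.Bijective T)
    (hsep : ∀ a b : 𝒜₁, a * b = 0 → T a * T b = 0)
    (hsep' : ∀ a b : 𝒜₁, T a * T b = 0 → a * b = 0)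
    (S : E₁ →ₗ[𝕜] E₂) (Ψ : (E₁ →L[𝕜] 𝕜) →ₗ[𝕜] (E₂ →L[𝕜] 𝕜))
    (hS : Function.Bijective S) (hΨ : Function.Bijective Ψ)
    (hrep : ∀ (e : E₁) (f : E₁ →L[𝕜] 𝕜) (h : rankOne e f ∈ 𝒜₁),
      ((T ⟨rankOne e f, h⟩ : E₂ →L[𝕜] E₂)) = rankOne (S e) (Ψ f)) :
    (∀ (e : E₁) (f : E₁ →L[𝕜] 𝕜), f e = 0 ↔ Ψ f (S e) = 0) ∧
      (∀ f : E₁ →L[𝕜] 𝕜,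
        LinearMap.ker (((Ψ f : E₂ →L[𝕜] 𝕜) : E₂ →ₗ[𝕜] 𝕜) ∘ₗ S) = LinearMap.ker (f : E₁ →ₗ[𝕜] 𝕜)) ∧
      (∀ f : E₁ →L[𝕜] 𝕜,
        LinearMap.ker ((Ψ f : E₂ →L[𝕜] 𝕜) : E₂ →ₗ[𝕜] 𝕜) = (LinearMap.ker (f : E₁ →ₗ[𝕜] 𝕜)).map S) :=
  kernel_identities_of_biseparating_general 𝒜₁ 𝒜₂ h𝒜₁ T hsep hsep' S Ψ hS hrep
end

section
/- Let E be a Banach space over 𝕜, let 𝒜 be a standard subalgebra of B(E), let α ∈ 𝕜 be nonzero, and let U : 𝒜 → B(E) be a linear map that is separating (i.e., A ∘ B = 0 implies U(A) ∘ U(B) = 0 for all A, B ∈ 𝒜) and satisfies U(R) = α · R for every rank-one operator R ∈ 𝒜. Then U(A) = α · A for every A ∈ 𝒜. -/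
set_option synthInstance.maxHeartbeats 400000
set_option maxHeartbeats 1000000

lemma range_smulRight_eq {𝕜 : Type*} [RCLike 𝕜] {E : Type*} [NormedAddCommGroup E]
    [NormedSpace 𝕜 E] (f : E →L[𝕜] 𝕜) (x y : E) (hy : f y = 1) :
    LinearMap.range ((f.smulRight x : E →L[𝕜] E) : E →ₗ[𝕜] E) = Submodule.span 𝕜 {x} := by
  apply le_antisymm
  · rintro z ⟨w, rfl⟩
    exact Submodule.smul_mem _ _ (Submodule.mem_span_singleton_self x)
  · rw [Submodule.span_le, Set.singleton_subset_iff]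
    exact ⟨y, by simp [hy]⟩

theorem separating_and_scalar_on_rank_one_implies_scalar
    {𝕜 : Type*} [RCLike 𝕜]
    {E : Type*} [NormedAddCommGroup E] [NormedSpace 𝕜 E] [CompleteSpace E]
    (𝒜 : Subalgebra 𝕜 (E →L[𝕜] E)) (h𝒜 : IsStandardSubalgebra 𝕜 𝒜)
    (α : 𝕜) (hα : α ≠ 0)
    (U : 𝒜 →ₗ[𝕜] (E →L[𝕜] E))
    (hsep : ∀ A B : 𝒜, A * B = 0 → U A * U B = 0)
    (hrank1 : ∀ R : 𝒜,
      Module.finrank 𝕜 (LinearMap.range ((R : E →L[𝕜] E) : E →ₗ[𝕜] E)) = 1 →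
        U R = α • (R : E →L[𝕜] E)) :
    ∀ A : 𝒜, U A = α • (A : E →L[𝕜] E) := by
  -- membership of rank-one-type operators
  have hmem : ∀ (f : E →L[𝕜] 𝕜) (x : E), (f.smulRight x : E →L[𝕜] E) ∈ 𝒜 := by
    intro f x
    apply h𝒜
    have hle : LinearMap.range ((f.smulRight x : E →L[𝕜] E) : E →ₗ[𝕜] E)
        ≤ Submodule.span 𝕜 {x} := by
      rintro z ⟨w, rfl⟩
      exact Submodule.smul_mem _ _ (Submodule.mem_span_singleton_self x)
    exact Submodule.finiteDimensional_of_le hle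
  -- Step 1: kernel inclusion
  have step1 : ∀ (A : 𝒜) (x : E), (A : E →L[𝕜] E) x = 0 → U A x = 0 := by
    intro A x hAx
    rcases eq_or_ne x 0 with rfl | hx
    · simp
    obtain ⟨f, hf⟩ := SeparatingDual.exists_eq_one (R := 𝕜) hx
    set B : 𝒜 := ⟨f.smulRight x, hmem f x⟩ with hB
    have hAB : A * B = 0 := by
      ext z
      simp only [Subalgebra.coe_mul, ContinuousLinearMap.mul_apply, hB,
        ContinuousLinearMap.smulRight_apply, map_smul, hAx, smul_zero]
      rfl
    have hUB : U B = α • (B : E →L[𝕜] E) := by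
      apply hrank1
      rw [hB, range_smulRight_eq f x x hf]
      exact finrank_span_singleton hx
    have h0 := hsep A B hAB
    have := congrArg (fun T : E →L[𝕜] E => T x) h0
    simp only [ContinuousLinearMap.mul_apply, hUB] at this
    simp only [hB, ContinuousLinearMap.smul_apply, ContinuousLinearMap.smulRight_apply,
      hf, one_smul, map_smul, ContinuousLinearMap.zero_apply] at this
    exact smul_right_injective _ hα (by simpa using this)
  -- Step 2
  intro A
  ext x
  rcases eq_or_ne x 0 with rfl | hx
  · simp
  obtain ⟨f, hf⟩ := SeparatingDual.exists_eq_one (R := 𝕜) hx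
  rcases eq_or_ne ((A : E →L[𝕜] E) x) 0 with hAx | hAx
  · rw [step1 A x hAx]
    simp [hAx]
  · set R : 𝒜 := ⟨f.smulRight ((A : E →L[𝕜] E) x), hmem f _⟩ with hR
    have hUR : U R = α • (R : E →L[𝕜] E) := by
      apply hrank1
      rw [hR, range_smulRight_eq f _ x hf]
      exact finrank_span_singleton hAx
    have h1 : (((A - R : 𝒜) : E →L[𝕜] E)) x = 0 := by
      simp [hR, ContinuousLinearMap.smulRight_apply, hf]
    have h2 := step1 (A - R) x h1
    rw [map_sub] at h2
    have h3 : U A x = U R x := by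
      have h4 := h2
      simp only [ContinuousLinearMap.sub_apply] at h4
      exact sub_eq_zero.mp h4
    rw [h3, hUR]
    simp [hR, ContinuousLinearMap.smulRight_apply, hf]
end

section
/- Let X be a topological space, E a Banach space over 𝕜, and 𝒜 a standard subalgebra of B(E). Let F₁, F₂ ∈ C(X, 𝒜) and suppose F₂ ∈ AI, i.e., L(F₂) ⊆ R(F₂). Then F₁·F₂ = 0 if and only if c(F₁) ∩ c(F₂) = ∅. -/
set_option synthInstance.maxHeartbeats 400000
set_option maxHeartbeats 1000000

/-!
A standard operator algebra is prime: for nonzero `a, b` some rank-one `k` has `b k a ≠ 0`.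
In `C(X, R)` over a prime ring `R`, if `F₁ F₂ = 0` and `F₁ x, F₂ x ≠ 0`, pick `k` with
`F₂ x · k · F₁ x ≠ 0`; then `G = k F₁` satisfies `G F₂ = 0`, so `F₂ G = 0` by the hypothesis
on `F₂`, which fails at `x`.
-/

namespace ContinuousLinearMap

variable {𝕜 : Type*} [RCLike 𝕜] {E F G : Type*}
  [NormedAddCommGroup E] [NormedSpace 𝕜 E] [NormedAddCommGroup F] [NormedSpace 𝕜 F]
  [NormedAddCommGroup G] [NormedSpace 𝕜 G]

theorem finiteDimensional_range_smulRight (φ : F →L[𝕜] 𝕜) (v : F) :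
    FiniteDimensional 𝕜 (LinearMap.range (φ.smulRight v : F →ₗ[𝕜] F)) := by
  refine Submodule.finiteDimensional_of_le (S₂ := 𝕜 ∙ v) ?_
  rintro _ ⟨u, rfl⟩
  exact Submodule.smul_mem _ _ (Submodule.mem_span_singleton_self v)

theorem exists_finiteDimensional_range_comp_comp_ne_zero {A : E →L[𝕜] F} {B : F →L[𝕜] G}
    (hA : A ≠ 0) (hB : B ≠ 0) :
    ∃ K : F →L[𝕜] F, FiniteDimensional 𝕜 (LinearMap.range (K : F →ₗ[𝕜] F)) ∧
      B.comp (K.comp A) ≠ 0 := by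
  obtain ⟨w, hw⟩ : ∃ w, A w ≠ 0 := DFunLike.ne_iff.mp hA
  obtain ⟨v, hv⟩ : ∃ v, B v ≠ 0 := DFunLike.ne_iff.mp hB
  obtain ⟨φ, -, hφ⟩ := exists_dual_vector 𝕜 (A w) (norm_ne_zero_iff.mpr hw)
  refine ⟨φ.smulRight v, finiteDimensional_range_smulRight φ v, fun h => ?_⟩
  have hφ_ne : φ (A w) ≠ 0 := by simpa [hφ] using hw
  have := DFunLike.congr_fun h w
  simp only [comp_apply, smulRight_apply, map_smul, zero_apply] at this
  exact smul_ne_zero hφ_ne hv this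

end ContinuousLinearMap

theorem IsStandardSubalgebra.exists_mul_mul_ne_zero {𝕜 : Type*} [RCLike 𝕜] {E : Type*}
    [NormedAddCommGroup E] [NormedSpace 𝕜 E] {𝒜 : Subalgebra 𝕜 (E →L[𝕜] E)}
    (h𝒜 : IsStandardSubalgebra 𝕜 𝒜) {a b : 𝒜} (ha : a ≠ 0) (hb : b ≠ 0) :
    ∃ k : 𝒜, b * k * a ≠ 0 := by
  obtain ⟨K, hK, hBKA⟩ := ContinuousLinearMap.exists_finiteDimensional_range_comp_comp_ne_zero
    (Subtype.coe_ne_coe.mpr ha) (Subtype.coe_ne_coe.mpr hb)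
  refine ⟨⟨K, h𝒜 K hK⟩, fun h => hBKA ?_⟩
  exact (by simpa [mul_assoc] using congrArg Subtype.val h : (b : E →L[𝕜] E) * (K * a) = 0)

namespace ContinuousMap

variable {X R : Type*} [TopologicalSpace X] [TopologicalSpace R]

theorem mul_eq_zero_of_cozero_disjoint [MulZeroClass R] [ContinuousMul R] {F₁ F₂ : C(X, R)}
    (h : {x | F₁ x ≠ 0} ∩ {x | F₂ x ≠ 0} = ∅) : F₁ * F₂ = 0 := by
  ext x
  by_cases h₁ : F₁ x = 0
  · simp [h₁]
  · have h₂ : F₂ x = 0 := by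
      by_contra h₂
      exact (Set.eq_empty_iff_forall_notMem.mp h x) ⟨h₁, h₂⟩
    simp [h₂]

theorem cozero_disjoint_of_mul_eq_zero [SemigroupWithZero R] [ContinuousMul R]
    (hR : ∀ a b : R, a ≠ 0 → b ≠ 0 → ∃ k, b * k * a ≠ 0) {F₁ F₂ : C(X, R)}
    (hF₂ : ∀ G : C(X, R), G * F₂ = 0 → F₂ * G = 0) (h : F₁ * F₂ = 0) :
    {x | F₁ x ≠ 0} ∩ {x | F₂ x ≠ 0} = ∅ := by
  refine Set.eq_empty_iff_forall_notMem.mpr fun x ⟨h₁, h₂⟩ => ?_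
  obtain ⟨k, hk⟩ := hR _ _ h₁ h₂
  have hG : const X k * F₁ * F₂ = 0 := by rw [mul_assoc, h, mul_zero]
  have := DFunLike.congr_fun (hF₂ _ hG) x
  simp only [mul_apply, const_apply, zero_apply] at this
  exact hk (by rw [mul_assoc, this])

end ContinuousMap

theorem mul_eq_zero_iff_cozero_disjoint_of_mem_AI_general
    {𝕜 : Type*} [RCLike 𝕜]
    {E : Type*} [NormedAddCommGroup E] [NormedSpace 𝕜 E]
    (𝒜 : Subalgebra 𝕜 (E →L[𝕜] E)) (h𝒜 : IsStandardSubalgebra 𝕜 𝒜)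
    {X : Type*} [TopologicalSpace X]
    (F₁ F₂ : C(X, 𝒜))
    (hAI : ∀ G : C(X, 𝒜), G * F₂ = 0 → F₂ * G = 0) :
    F₁ * F₂ = 0 ↔ {x | F₁ x ≠ 0} ∩ {x | F₂ x ≠ 0} = ∅ :=
  ⟨ContinuousMap.cozero_disjoint_of_mul_eq_zero (fun _ _ => h𝒜.exists_mul_mul_ne_zero) hAI,
    ContinuousMap.mul_eq_zero_of_cozero_disjoint⟩

theorem mul_eq_zero_iff_cozero_disjoint_of_mem_AI
    {𝕜 : Type*} [RCLike 𝕜]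
    {E : Type*} [NormedAddCommGroup E] [NormedSpace 𝕜 E] [CompleteSpace E]
    (𝒜 : Subalgebra 𝕜 (E →L[𝕜] E)) (h𝒜 : IsStandardSubalgebra 𝕜 𝒜)
    {X : Type*} [TopologicalSpace X]
    (F₁ F₂ : C(X, 𝒜))
    (hAI : ∀ G : C(X, 𝒜), G * F₂ = 0 → F₂ * G = 0) :
    F₁ * F₂ = 0 ↔ {x | F₁ x ≠ 0} ∩ {x | F₂ x ≠ 0} = ∅ :=
  mul_eq_zero_iff_cozero_disjoint_of_mem_AI_general 𝒜 h𝒜 F₁ F₂ hAI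
end

section
/- Let X be a completely regular Hausdorff space, E a nonzero Banach space over 𝕜, and 𝒜 a standard subalgebra of B(E). Then for every F ∈ C(X, 𝒜), 𝒞(F) = {G ∈ C(X, 𝒜) : c(G) ⊆ int(cl(c(F)))}, where int and cl denote interior and closure in X. -/
set_option synthInstance.maxHeartbeats 400000
set_option maxHeartbeats 1000000

/-!
If `x₀ ∉ cl c(F)`, complete regularity gives a continuous scalar function `g` vanishing on
`cl c(F)` with `g x₀ = 1`; the central function `x ↦ g x • 1` lies in `AI` and is annihilated by
`F`, so every `G ∈ 𝒞(F)` vanishes at `x₀`. Thus `c(G) ⊆ cl c(F)`, and `c(G)` is open.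

Conversely, a standard algebra is prime: for nonzero `a, b` a rank-one operator `t` gives
`a t b ≠ 0`. If `H ∈ AI` and `F H = 0`, then `(t F) H = 0`, hence `H t F = 0` for every constant
`t`, so `H` vanishes on `c(F)` and therefore on its closure, which contains `c(G)`.
-/

open Set

/-- The paper's condition `L(h) ⊆ R(h)` defining the set `AI`. -/
def LeftAnnihilatorLERight {R : Type*} [Mul R] [Zero R] (h : R) : Prop :=
  ∀ k, k * h = 0 → h * k = 0

def IsPrimeRing (R : Type*) [Mul R] [Zero R] : Prop :=
  ∀ a b : R, a ≠ 0 → b ≠ 0 → ∃ t, a * t * b ≠ 0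

theorem leftAnnihilatorLERight_of_forall_commute {R : Type*} [Mul R] [Zero R] {h : R}
    (hh : ∀ k, k * h = h * k) : LeftAnnihilatorLERight h :=
  fun k hk => hh k ▸ hk

theorem IsStandardSubalgebra.isPrimeRing {𝕜 : Type*} [RCLike 𝕜] {E : Type*}
    [NormedAddCommGroup E] [NormedSpace 𝕜 E] {𝒜 : Subalgebra 𝕜 (E →L[𝕜] E)}
    (h𝒜 : IsStandardSubalgebra 𝕜 𝒜) : IsPrimeRing 𝒜 := by
  intro a b ha hb
  obtain ⟨u, hu⟩ := DFunLike.ne_iff.mp (Subtype.coe_ne_coe.mpr ha)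
  obtain ⟨ξ, hξ⟩ := DFunLike.ne_iff.mp (Subtype.coe_ne_coe.mpr hb)
  obtain ⟨φ, -, hφ⟩ := exists_dual_vector 𝕜 ((b : E →L[𝕜] E) ξ) (norm_ne_zero_iff.mpr hξ)
  have ht : φ.smulRight u ∈ 𝒜 := by
    refine h𝒜 _ (Submodule.finiteDimensional_of_le (S₂ := 𝕜 ∙ u) ?_)
    rintro _ ⟨z, rfl⟩
    exact Submodule.mem_span_singleton.mpr ⟨φ z, rfl⟩
  refine ⟨⟨_, ht⟩, fun h => ?_⟩
  have hφξ : φ ((b : E →L[𝕜] E) ξ) ≠ 0 := by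
    rw [hφ]
    exact_mod_cast norm_ne_zero_iff.mpr hξ
  have := congrArg (fun c : 𝒜 => (c : E →L[𝕜] E) ξ) h
  simp only [MulMemClass.coe_mul, mul_apply_eq_comp, ContinuousLinearMap.smulRight_apply,
    map_smul, ZeroMemClass.coe_zero, zero_apply] at this
  exact smul_ne_zero hφξ hu this

section ContinuousMapRing

variable {X A : Type*} [TopologicalSpace X] [Ring A] [TopologicalSpace A] [IsTopologicalRing A]

theorem ContinuousMap.eqOn_closure_cozero_zero_of_mul_eq_zero [T1Space A] (hA : IsPrimeRing A)
    {F H : C(X, A)} (hH : LeftAnnihilatorLERight H) (hFH : F * H = 0) :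
    EqOn H 0 (closure {x | F x ≠ 0}) := by
  refine closure_minimal (fun x hFx => ?_) (isClosed_singleton.preimage H.continuous)
  by_contra hHx
  obtain ⟨t, ht⟩ := hA (H x) (F x) hHx hFx
  have hHK : H * (ContinuousMap.const X t * F) = 0 :=
    hH _ (by rw [mul_assoc, hFH, mul_zero])
  exact ht (by simpa [mul_assoc] using congrArg (· x) hHK)

theorem ContinuousMap.mul_eq_zero_of_cozero_subset_closure [T1Space A] (hA : IsPrimeRing A)
    {F G H : C(X, A)} (hH : LeftAnnihilatorLERight H) (hFH : F * H = 0)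
    (hG : {x | G x ≠ 0} ⊆ closure {x | F x ≠ 0}) : G * H = 0 := by
  ext x
  by_cases hGx : G x = 0
  · simp [hGx]
  · simp [eqOn_closure_cozero_zero_of_mul_eq_zero hA hH hFH (hG hGx)]

theorem CompletelyRegularSpace.exists_continuousMap_eqOn_zero_eq_one (𝕜 : Type*) [RCLike 𝕜]
    [CompletelyRegularSpace X] {K : Set X} (hK : IsClosed K) {x₀ : X} (hx₀ : x₀ ∉ K) :
    ∃ g : C(X, 𝕜), EqOn g 0 K ∧ g x₀ = 1 := by
  obtain ⟨f, hf, hfx₀, hfK⟩ := CompletelyRegularSpace.completely_regular x₀ K hK hx₀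
  refine ⟨⟨fun x => ((1 - f x : ℝ) : 𝕜), by fun_prop⟩, fun x hx => ?_, ?_⟩
  · simp [hfK hx]
  · simp [hfx₀]

theorem ContinuousMap.cozero_subset_closure_of_forall_central (𝕜 : Type*) [RCLike 𝕜]
    [Algebra 𝕜 A] [ContinuousSMul 𝕜 A] [CompletelyRegularSpace X] {F G : C(X, A)}
    (hG : ∀ H : C(X, A), (∀ K, K * H = H * K) → F * H = 0 → G * H = 0) :
    {x | G x ≠ 0} ⊆ closure {x | F x ≠ 0} := by
  intro x₀ hGx₀
  by_contra hx₀
  obtain ⟨g, hg, hgx₀⟩ :=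
    CompletelyRegularSpace.exists_continuousMap_eqOn_zero_eq_one 𝕜 isClosed_closure hx₀
  let H : C(X, A) := (⟨algebraMap 𝕜 A, continuous_algebraMap 𝕜 A⟩ : C(𝕜, A)).comp g
  have hH : ∀ K, K * H = H * K := fun K => by ext x; exact (Algebra.commutes _ _).symm
  have hFH : F * H = 0 := by
    ext x
    by_cases hx : x ∈ closure {x | F x ≠ 0}
    · simp [H, hg hx]
    · have hFx : F x = 0 := not_not.mp fun h => hx (subset_closure h)
      simp [hFx]
  exact hGx₀ (by simpa [H, hgx₀] using congrArg (· x₀) (hG H hH hFH))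

end ContinuousMapRing

theorem C_of_F_eq_interior_closure_cozero_general
    {𝕜 : Type*} [RCLike 𝕜]
    {E : Type*} [NormedAddCommGroup E] [NormedSpace 𝕜 E]
    (𝒜 : Subalgebra 𝕜 (E →L[𝕜] E)) (h𝒜 : IsStandardSubalgebra 𝕜 𝒜)
    {X : Type*} [TopologicalSpace X] [CompletelyRegularSpace X]
    (F : C(X, 𝒜)) :
    {G : C(X, 𝒜) | ∀ H : C(X, 𝒜),
        (∀ K : C(X, 𝒜), K * H = 0 → H * K = 0) → F * H = 0 → G * H = 0} =
      {G : C(X, 𝒜) | {x | G x ≠ 0} ⊆ interior (closure {x | F x ≠ 0})} := by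
  ext G
  constructor
  · intro hG
    refine interior_maximal ?_ (isOpen_ne_fun G.continuous continuous_const)
    exact ContinuousMap.cozero_subset_closure_of_forall_central 𝕜
      fun H hH => hG H (leftAnnihilatorLERight_of_forall_commute hH)
  · intro hG H hH hFH
    exact ContinuousMap.mul_eq_zero_of_cozero_subset_closure h𝒜.isPrimeRing hH hFH
      (hG.trans interior_subset)

theorem C_of_F_eq_interior_closure_cozero
    {𝕜 : Type*} [RCLike 𝕜]
    {E : Type*} [NormedAddCommGroup E] [NormedSpace 𝕜 E] [CompleteSpace E] [Nontrivial E]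
    (𝒜 : Subalgebra 𝕜 (E →L[𝕜] E)) (h𝒜 : IsStandardSubalgebra 𝕜 𝒜)
    {X : Type*} [TopologicalSpace X] [CompletelyRegularSpace X] [T2Space X]
    (F : C(X, 𝒜)) :
    {G : C(X, 𝒜) | ∀ H : C(X, 𝒜),
        (∀ K : C(X, 𝒜), K * H = 0 → H * K = 0) → F * H = 0 → G * H = 0} =
      {G : C(X, 𝒜) | {x | G x ≠ 0} ⊆ interior (closure {x | F x ≠ 0})} :=
  C_of_F_eq_interior_closure_cozero_general 𝒜 h𝒜 F
end

section
/- Let X₁, X₂ be compact Hausdorff spaces, let N₁, N₂ be nonzero normed spaces over 𝕜, and let T : C(X₁, N₁) → C(X₂, N₂) be a strictly biseparating linear bijection. Then there exist a homeomorphism φ : X₂ → X₁ and, for each x ∈ X₂, a linear bijection J(x) : N₁ → N₂, such that (T F)(x) = (J(x))(F(φ(x))) for every x ∈ X₂ and every F ∈ C(X₁, N₁). -/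
/-!
A separating map `T` (disjoint supports go to disjoint supports) has at each `y` a unique support
point `φ y`: every neighbourhood of `φ y` carries an `F` with `T F y ≠ 0`, and, by a partition of
unity, `T F y = 0` as soon as `F` vanishes near `φ y`. Separation makes `φ` continuous, and the
support map of `T⁻¹` is its inverse, so `φ` is a homeomorphism.

The heart of the proof is that `F (φ y) = 0` already forces `T F y = 0`. Otherwise `F` takes
arbitrarily small nonzero values near `φ y`; cutting `F` along disjoint bands `‖F‖ ≈ w k` with
`w k → 0` gives disjointly supported pieces `s k`. The sequence `s k / √(w k)` is uniformly null,
so it sums to a continuous function and separation bounds `T (s k / √(w k))`; hence `T (s k) → 0`,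
whereas `T (s k) = T F` at points `φ⁻¹ (x k)` where `‖T F‖ > ‖T F y‖ / 2`. So `T F y` only depends
on `F (φ y)`, i.e. `T F y = J y (F (φ y))` with `J y v = T (const v) y`, and `J y` is inverted by
the corresponding map of `T⁻¹`.
-/

open Set Filter Topology Function

section

variable {𝕜 : Type*} [RCLike 𝕜] {M N : Type*} [NormedAddCommGroup M] [NormedSpace 𝕜 M]
  [NormedAddCommGroup N] [NormedSpace 𝕜 N] {X Y : Type*} [TopologicalSpace X] [TopologicalSpace Y]

variable (𝕜) in
@[simps]
def ContinuousMap.smulOfReal (u : C(X, ℝ)) (F : C(X, M)) : C(X, M) :=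
  ⟨fun x => (u x : 𝕜) • F x, by fun_prop⟩

theorem ContinuousMap.support_smulOfReal_subset (u : C(X, ℝ)) (F : C(X, M)) :
    support (u.smulOfReal 𝕜 F) ⊆ support u := fun x hx hu => hx (by simp [hu])

end

theorem exists_seq_pos_lt_div_four {α : Type*} (g : α → ℝ)
    (h : ∀ r > 0, ∃ a, 0 < g a ∧ g a < r) :
    ∃ a : ℕ → α, (∀ k, 0 < g (a k)) ∧ (∀ k, g (a (k + 1)) < g (a k) / 4) ∧
      Tendsto (fun k => g (a k)) atTop (𝓝 0) := by
  choose c hc using h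
  let next (a : {a // 0 < g a}) : {a // 0 < g a} := ⟨c (g a / 4) (by linarith [a.2]), (hc _ _).1⟩
  let a (k : ℕ) : {a // 0 < g a} := next^[k] ⟨c 1 one_pos, (hc _ _).1⟩
  have hsucc : ∀ k, g (a (k + 1)) < g (a k) / 4 := fun k => by
    rw [show a (k + 1) = next (a k) from iterate_succ_apply' next k _]
    exact (hc _ _).2
  have hgeom : ∀ k, g (a k) ≤ g (a 0) * (1 / 4) ^ k := fun k => by
    induction k with
    | zero => simp
    | succ k ih => rw [pow_succ]; linarith [hsucc k]
  refine ⟨fun k => (a k).1, fun k => (a k).2, hsucc, squeeze_zero (fun k => (a k).2.le) hgeom ?_⟩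
  simpa using (tendsto_pow_atTop_nhds_zero_of_lt_one (r := (1 / 4 : ℝ)) (by norm_num)
    (by norm_num)).const_mul (g (a 0))

theorem ContinuousMap.exists_eqOn_support_of_pairwise_disjoint {M X : Type*}
    [NormedAddCommGroup M] [TopologicalSpace X] {s : ℕ → C(X, M)}
    (hs : Pairwise (Disjoint on fun k => support (s k))) {ε : ℕ → ℝ}
    (hε : Tendsto ε atTop (𝓝 0)) (hsε : ∀ k x, ‖s k x‖ ≤ ε k) :
    ∃ Q : C(X, M), ∀ k, EqOn Q (s k) (support (s k)) := by
  set Q : X → M := fun x => ∑' k, s k x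
  have hQ : ∀ k, EqOn Q (s k) (support (s k)) := fun k x hx =>
    tsum_eq_single k fun j hj => notMem_support.1 fun hjx => Set.disjoint_left.1 (hs hj) hjx hx
  have htail : ∀ m x, ∃ k ≥ m, Q x - ∑ j ∈ Finset.range m, s j x = s k x := by
    intro m x
    by_cases h : ∃ k ≥ m, s k x ≠ 0
    · obtain ⟨k, hkm, hk⟩ := h
      refine ⟨k, hkm, ?_⟩
      rw [hQ k hk, Finset.sum_eq_zero fun j hj => ?_, sub_zero]
      exact notMem_support.1 fun hjx =>
        Set.disjoint_left.1 (hs (by simp only [Finset.mem_range] at hj; omega)) hjx hk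
    · push Not at h
      refine ⟨m, le_rfl, ?_⟩
      rw [h m le_rfl, sub_eq_zero]
      exact tsum_eq_sum fun j hj => h j (by simpa using hj)
  have hunif : TendstoUniformly (fun m x => ∑ j ∈ Finset.range m, s j x) Q atTop := by
    refine Metric.tendstoUniformly_iff.2 fun δ hδ => ?_
    obtain ⟨n, hn⟩ := eventually_atTop.1 (hε.eventually (gt_mem_nhds hδ))
    filter_upwards [eventually_ge_atTop n] with m hm x
    obtain ⟨k, hkm, hk⟩ := htail m x
    rw [dist_eq_norm, hk]
    exact (hsε k x).trans_lt (hn k (hm.trans hkm))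
  exact ⟨⟨Q, hunif.continuous (Frequently.of_forall fun m => by fun_prop)⟩, hQ⟩

theorem ContinuousMap.exists_band_cutoff (𝕜 : Type*) [RCLike 𝕜] {M X : Type*}
    [NormedAddCommGroup M] [NormedSpace 𝕜 M] [TopologicalSpace X] [NormalSpace X] (f : C(X, M))
    {a b c d : ℝ} (hab : a < b) (hcd : c < d) :
    ∃ s : C(X, M), support s ⊆ (‖f ·‖) ⁻¹' Ioo a d ∧ (∀ x, ‖s x‖ ≤ ‖f x‖) ∧
      EqOn s f ((‖f ·‖) ⁻¹' Icc b c) := by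
  have hf : Continuous (‖f ·‖) := by fun_prop
  obtain ⟨θ, hθ0, hθ1, hθ⟩ := exists_continuous_zero_one_of_isClosed
    ((isClosed_Iic.union isClosed_Ici).preimage hf) (isClosed_Icc.preimage hf)
    (Set.disjoint_left.2 fun x hx hx' => by
      rcases hx with hx | hx
      · exact (hx.trans_lt hab).not_ge (mem_preimage.1 hx').1
      · exact (hcd.trans_le hx).not_ge (mem_preimage.1 hx').2)
  refine ⟨θ.smulOfReal 𝕜 f, fun x hx => ?_, fun x => ?_, fun x hx => by simp [hθ1 hx]⟩
  · by_contra hxad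
    refine hx ?_
    have : ‖f x‖ ≤ a ∨ d ≤ ‖f x‖ := by
      simp only [mem_preimage, mem_Ioo, not_and_or, not_lt] at hxad; exact hxad
    simp [hθ0 this]
  · rw [ContinuousMap.smulOfReal_apply, norm_smul, RCLike.norm_ofReal, abs_of_nonneg (hθ x).1]
    exact mul_le_of_le_one_left (norm_nonneg _) (hθ x).2

theorem ContinuousMap.exists_pairwise_disjoint_band_cutoffs (𝕜 : Type*) [RCLike 𝕜] {M X : Type*}
    [NormedAddCommGroup M] [NormedSpace 𝕜 M] [TopologicalSpace X] [NormalSpace X] (f : C(X, M))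
    {w : ℕ → ℝ} (hw : ∀ k, 0 < w k) (hw4 : ∀ k, w (k + 1) < w k / 4) :
    ∃ s : ℕ → C(X, M), Pairwise (Disjoint on fun k => support (s k)) ∧
      (∀ k x, ‖s k x‖ ≤ 2 * w k) ∧
      ∀ k, EqOn (s k) f ((‖f ·‖) ⁻¹' Icc (3 / 4 * w k) (3 / 2 * w k)) := by
  choose s hs_supp hs_le hs_eq using fun k => f.exists_band_cutoff 𝕜
    (a := w k / 2) (b := 3 / 4 * w k) (c := 3 / 2 * w k) (d := 2 * w k) (by linarith [hw k])
    (by linarith [hw k])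
  have hanti : Antitone w := antitone_nat_of_succ_le fun k => by linarith [hw4 k, hw k]
  have hband : ∀ j k, j < k → 2 * w k < w j / 2 := fun j k hjk => by
    linarith [hanti (Nat.succ_le_of_lt hjk), hw4 j]
  refine ⟨s, fun j k hjk => Set.disjoint_left.2 fun x hj hk => ?_, fun k x => ?_, hs_eq⟩
  · have hj' := hs_supp j hj
    have hk' := hs_supp k hk
    simp only [mem_preimage, mem_Ioo] at hj' hk'
    rcases hjk.lt_or_gt with h | h
    · linarith [hband j k h]
    · linarith [hband k j h]
  · by_cases hx : s k x = 0
    · simp [hx, (hw k).le]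
    · exact (hs_le k x).trans (hs_supp k hx).2.le

section

variable {𝕜 : Type*} [RCLike 𝕜] {M N : Type*} [NormedAddCommGroup M] [NormedSpace 𝕜 M]
  [NormedAddCommGroup N] [NormedSpace 𝕜 N] {X Y : Type*} [TopologicalSpace X] [TopologicalSpace Y]

def IsSeparating (T : C(X, M) →ₗ[𝕜] C(Y, N)) : Prop :=
  ∀ F G : C(X, M), Disjoint (support F) (support G) → Disjoint (support (T F)) (support (T G))

def IsSupportPoint (T : C(X, M) →ₗ[𝕜] C(Y, N)) (y : Y) (x : X) : Prop :=
  ∀ U : Set X, IsOpen U → x ∈ U → ∃ F : C(X, M), support F ⊆ U ∧ T F y ≠ 0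

theorem forall_norm_mul_norm_eq_zero_iff_disjoint_support (F : C(X, M)) (G : C(X, N)) :
    (∀ x, ‖F x‖ * ‖G x‖ = 0) ↔ Disjoint (support F) (support G) := by
  simp [Set.disjoint_left, or_iff_not_imp_left]

theorem exists_isSupportPoint_mem_tsupport [CompactSpace X] [T2Space X]
    (T : C(X, M) →ₗ[𝕜] C(Y, N)) {F : C(X, M)} {y : Y} (hF : T F y ≠ 0) :
    ∃ x ∈ tsupport F, IsSupportPoint T y x := by
  by_contra! h
  simp only [IsSupportPoint, not_forall, not_exists, not_and, not_not] at h
  choose U hUo hxU hU using h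
  obtain ⟨t, ht⟩ := (isClosed_tsupport F).isCompact.elim_finite_subcover
    (fun x : tsupport F => U x x.2) (fun x => hUo _ _) fun x hx => mem_iUnion.2 ⟨⟨x, hx⟩, hxU x hx⟩
  obtain ⟨p, hp⟩ := PartitionOfUnity.exists_isSubordinate (isClosed_tsupport F)
    (fun i : t => U i.1 i.1.2) (fun i => hUo _ _) fun x hx => by
      obtain ⟨i, hi, hxi⟩ := mem_iUnion₂.1 (ht hx)
      exact mem_iUnion.2 ⟨⟨i, hi⟩, hxi⟩
  have hsum : F = ∑ i, (p i).smulOfReal 𝕜 F := by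
    ext x
    by_cases hx : x ∈ tsupport F
    · have : ∑ i, p i x = 1 := by rw [← finsum_eq_sum_of_fintype]; exact p.sum_eq_one hx
      rw [ContinuousMap.sum_apply]
      simp only [ContinuousMap.smulOfReal_apply]
      rw [← Finset.sum_smul, ← RCLike.ofReal_sum, this, RCLike.ofReal_one, one_smul]
    · simp [image_eq_zero_of_notMem_tsupport hx]
  refine hF ?_
  rw [hsum, map_sum, ContinuousMap.sum_apply]
  exact Finset.sum_eq_zero fun i _ =>
    hU _ _ _ ((((p i).support_smulOfReal_subset F).trans (subset_tsupport _)).trans (hp i))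

theorem exists_isSupportPoint [CompactSpace X] [T2Space X] [Nontrivial N]
    {T : C(X, M) →ₗ[𝕜] C(Y, N)} (hT : Surjective T) (y : Y) : ∃ x, IsSupportPoint T y x := by
  obtain ⟨w, hw⟩ := exists_ne (0 : N)
  obtain ⟨F, hF⟩ := hT (ContinuousMap.const Y w)
  obtain ⟨x, -, hx⟩ := exists_isSupportPoint_mem_tsupport T (F := F) (y := y) (by simpa [hF])
  exact ⟨x, hx⟩

namespace IsSeparating

variable {T : C(X, M) →ₗ[𝕜] C(Y, N)}

theorem eq_of_isSupportPoint [T2Space X] (hT : IsSeparating T) {y : Y} {x₁ x₂ : X}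
    (h₁ : IsSupportPoint T y x₁) (h₂ : IsSupportPoint T y x₂) : x₁ = x₂ := by
  by_contra hne
  obtain ⟨U₁, U₂, hU₁, hU₂, hx₁, hx₂, hU⟩ := t2_separation hne
  obtain ⟨F₁, hF₁U, hF₁⟩ := h₁ U₁ hU₁ hx₁
  obtain ⟨F₂, hF₂U, hF₂⟩ := h₂ U₂ hU₂ hx₂
  exact Set.disjoint_left.1 (hT F₁ F₂ (hU.mono hF₁U hF₂U)) hF₁ hF₂

theorem apply_eq_zero_of_eventuallyEq_zero [CompactSpace X] [T2Space X] (hT : IsSeparating T)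
    {y : Y} {x : X} (hx : IsSupportPoint T y x) {F : C(X, M)} (hF : F =ᶠ[𝓝 x] 0) : T F y = 0 := by
  by_contra hTF
  obtain ⟨x', hx'F, hx'⟩ := exists_isSupportPoint_mem_tsupport T hTF
  rw [hT.eq_of_isSupportPoint hx' hx] at hx'F
  exact notMem_tsupport_iff_eventuallyEq.2 hF hx'F

theorem continuous_of_isSupportPoint [CompactSpace X] [T2Space X] (hT : IsSeparating T)
    {φ : Y → X} (hφ : ∀ y, IsSupportPoint T y (φ y)) : Continuous φ := by
  refine continuous_iff_continuousAt.2 fun y => (closed_nhds_basis (φ y)).tendsto_right_iff.2 ?_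
  rintro t ⟨ht, htc⟩
  obtain ⟨F, hFt, hFy⟩ := hφ y (interior t) isOpen_interior (mem_interior_iff_mem_nhds.2 ht)
  filter_upwards [(T F).continuous.isOpen_support.mem_nhds hFy] with y' hy'
  by_contra hy't
  refine hy' (hT.apply_eq_zero_of_eventuallyEq_zero (hφ y') ?_)
  refine notMem_tsupport_iff_eventuallyEq.1 fun h => hy't ?_
  exact closure_minimal (hFt.trans interior_subset) htc h

theorem eq_of_isSupportPoint_of_leftInverse [CompactSpace X] [T2Space X] [NormalSpace Y]
    [T2Space Y] [Nontrivial N] {S : C(Y, N) →ₗ[𝕜] C(X, M)} (hT : IsSeparating T)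
    (hS : IsSeparating S) (hTS : LeftInverse T S) {y y' : Y} {x : X} (hx : IsSupportPoint T y x)
    (hy' : IsSupportPoint S x y') : y' = y := by
  by_contra hne
  obtain ⟨V', V, hV', hV, hy'V', hyV, hVV'⟩ := t2_separation hne
  obtain ⟨G, hGV', hGx⟩ := hy' V' hV' hy'V'
  obtain ⟨w, hw⟩ := exists_ne (0 : N)
  obtain ⟨u, hu0, hu1, -⟩ := exists_continuous_zero_one_of_isClosed hV.isClosed_compl
    isClosed_singleton (disjoint_singleton_right.2 (not_not.2 hyV))
  set H := u.smulOfReal 𝕜 (ContinuousMap.const Y w)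
  have hHV : support H ⊆ V :=
    (u.support_smulOfReal_subset _).trans fun z hz => by_contra fun hzV => hz (hu0 hzV)
  have hHy : H y ≠ 0 := by simpa [H, hu1 rfl] using hw
  -- `S H` vanishes on the support of `S G`, a neighbourhood of `x`, so `H y = T (S H) y = 0`
  have hSHG := hS H G (hVV'.symm.mono hHV hGV')
  refine hHy ?_
  rw [← hTS H]
  refine hT.apply_eq_zero_of_eventuallyEq_zero hx ?_
  filter_upwards [(S G).continuous.isOpen_support.mem_nhds hGx] with z hz
  exact notMem_support.1 (Set.disjoint_right.1 hSHG hz)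

theorem exists_norm_le_of_pairwise_disjoint [CompactSpace X] [CompactSpace Y]
    (hT : IsSeparating T) {s : ℕ → C(X, M)} (hs : Pairwise (Disjoint on fun k => support (s k)))
    (hs0 : Tendsto (fun k => ‖s k‖) atTop (𝓝 0)) : ∃ C, ∀ k, ‖T (s k)‖ ≤ C := by
  obtain ⟨Q, hQ⟩ := ContinuousMap.exists_eqOn_support_of_pairwise_disjoint hs hs0
    fun k x => (s k).norm_coe_le_norm x
  refine ⟨‖T Q‖, fun k => ((T (s k)).norm_le (norm_nonneg _)).2 fun y => ?_⟩
  by_cases hy : T (s k) y = 0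
  · simp [hy]
  -- separation gives `T (s k) = T Q` on the support of `T (s k)`
  have hdisj : Disjoint (support (Q - s k)) (support (s k)) :=
    Set.disjoint_right.2 fun x hx => notMem_support.2 (sub_eq_zero.2 (hQ k hx))
  have hQy := notMem_support.1 (Set.disjoint_right.1 (hT _ _ hdisj) hy)
  rw [map_sub, ContinuousMap.sub_apply, sub_eq_zero] at hQy
  exact hQy ▸ (T Q).norm_coe_le_norm y

theorem tendsto_norm_zero_of_pairwise_disjoint [CompactSpace X] [CompactSpace Y]
    (hT : IsSeparating T) {s : ℕ → C(X, M)} (hs : Pairwise (Disjoint on fun k => support (s k)))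
    (hs0 : Tendsto (fun k => ‖s k‖) atTop (𝓝 0)) : Tendsto (fun k => ‖T (s k)‖) atTop (𝓝 0) := by
  set r : ℕ → ℝ := fun k => √‖s k‖
  have hr0 : Tendsto r atTop (𝓝 0) := by
    simpa [r, Function.comp_def] using (Real.continuous_sqrt.tendsto 0).comp hs0
  -- rescaling by `r⁻¹` keeps the family null but would blow up `T (s k)` if it were not null
  set t : ℕ → C(X, M) := fun k => (((r k)⁻¹ : ℝ) : 𝕜) • s k
  have hst : ∀ k, s k = (r k : 𝕜) • t k := fun k => by
    rcases eq_or_ne (s k) 0 with h | h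
    · simp [t, h]
    · have : (r k : 𝕜) ≠ 0 := RCLike.ofReal_ne_zero.2 (Real.sqrt_ne_zero'.2 (norm_pos_iff.2 h))
      simp [t, smul_smul, this]
  have ht : ∀ k, ‖t k‖ = r k := fun k => by
    rw [norm_smul, RCLike.norm_ofReal, abs_of_nonneg (by positivity), inv_mul_eq_div, Real.div_sqrt]
  obtain ⟨C, hC⟩ := hT.exists_norm_le_of_pairwise_disjoint (s := t)
    (hs.mono fun j k h => h.mono (support_const_smul_subset _ _) (support_const_smul_subset _ _))
    (by simpa [ht] using hr0)
  refine squeeze_zero (fun _ => norm_nonneg _) (fun k => ?_) (by simpa using hr0.mul_const C)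
  rw [hst k, map_smul, norm_smul, RCLike.norm_ofReal, abs_of_nonneg (Real.sqrt_nonneg _)]
  exact mul_le_mul_of_nonneg_left (hC k) (Real.sqrt_nonneg _)

theorem apply_eq_zero_of_apply_eq_zero [CompactSpace X] [T2Space X] [CompactSpace Y]
    (hT : IsSeparating T) (e : Y ≃ₜ X) (he : ∀ y, IsSupportPoint T y (e y)) {f : C(X, M)}
    {y : Y} (hf : f (e y) = 0) : T f y = 0 := by
  by_contra hTf
  set η := ‖T f y‖
  have hη : 0 < η := norm_pos_iff.2 hTf
  set U : Set X := e.symm ⁻¹' {y' | η / 2 < ‖T f y'‖}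
  have hU : IsOpen U :=
    (isOpen_lt continuous_const (T f).continuous.norm).preimage e.symm.continuous
  have hyU : e y ∈ U := by
    show η / 2 < ‖T f (e.symm (e y))‖
    rw [e.symm_apply_apply]; linarith
  have hsmall : ∀ r > 0, ∃ x : U, 0 < ‖f x‖ ∧ ‖f x‖ < r := by
    intro r hr
    by_contra! h
    refine hTf (hT.apply_eq_zero_of_eventuallyEq_zero (he y) ?_)
    filter_upwards [hU.mem_nhds hyU, (isOpen_lt f.continuous.norm continuous_const).mem_nhds
      (show ‖f (e y)‖ < r by simpa [hf])] with x hxU hxr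
    by_contra hfx
    exact (h ⟨x, hxU⟩ (norm_pos_iff.2 hfx)).not_gt hxr
  obtain ⟨x, hx0, hx4, hxlim⟩ := exists_seq_pos_lt_div_four _ hsmall
  obtain ⟨s, hs, hs_le, hs_eq⟩ := ContinuousMap.exists_pairwise_disjoint_band_cutoffs 𝕜 f hx0 hx4
  -- `T (s k)` and `T f` agree at `e.symm (x k)`, since `s k = f` near `x k`
  have hTs : ∀ k, η / 2 < ‖T (s k) (e.symm (x k))‖ := fun k => by
    have hxk := he (e.symm (x k))
    rw [e.apply_symm_apply] at hxk
    have hfs : f - s k =ᶠ[𝓝 (x k : X)] 0 := by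
      have hw := hx0 k
      filter_upwards [(isOpen_Ioo.preimage f.continuous.norm).mem_nhds
        (show ‖f (x k)‖ ∈ Ioo (3 / 4 * ‖f (x k)‖) (3 / 2 * ‖f (x k)‖) by
          constructor <;> linarith)] with z hz
      simp [hs_eq k (Ioo_subset_Icc_self hz)]
    have h0 := hT.apply_eq_zero_of_eventuallyEq_zero hxk hfs
    rw [map_sub, ContinuousMap.sub_apply, sub_eq_zero] at h0
    exact h0 ▸ (x k).2
  have hTs0 := hT.tendsto_norm_zero_of_pairwise_disjoint hs <|
    squeeze_zero (fun _ => norm_nonneg _)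
      (fun k => ((s k).norm_le (by linarith [hx0 k])).2 (hs_le k))
      (by simpa using hxlim.const_mul 2)
  obtain ⟨k, hk⟩ := (hTs0.eventually (gt_mem_nhds (half_pos hη))).exists
  exact (hTs k).not_gt (((T (s k)).norm_coe_le_norm _).trans_lt hk)

end IsSeparating

def weight (T : C(X, M) →ₗ[𝕜] C(Y, N)) (y : Y) : M →ₗ[𝕜] N where
  toFun v := T (ContinuousMap.const X v) y
  map_add' v w := by
    rw [show ContinuousMap.const X (v + w) = .const X v + .const X w from rfl, map_add]; rfl
  map_smul' c v := by
    rw [show ContinuousMap.const X (c • v) = c • .const X v from rfl, map_smul]; rfl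

theorem apply_eq_weight_apply {T : C(X, M) →ₗ[𝕜] C(Y, N)} {φ : Y → X}
    (hT : ∀ (f : C(X, M)) y, f (φ y) = 0 → T f y = 0) (y : Y) (F : C(X, M)) :
    T F y = weight T y (F (φ y)) := by
  have := hT (F - ContinuousMap.const X (F (φ y))) y (by simp)
  rwa [map_sub, ContinuousMap.sub_apply, sub_eq_zero] at this

theorem bijective_weight {T : C(X, M) →ₗ[𝕜] C(Y, N)} {S : C(Y, N) →ₗ[𝕜] C(X, M)}
    (hST : LeftInverse S T) (hTS : RightInverse S T) (e : Y ≃ₜ X)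
    (hT : ∀ y F, T F y = weight T y (F (e y))) (hS : ∀ x G, S G x = weight S x (G (e.symm x)))
    (y : Y) : Bijective (weight T y) := by
  refine bijective_iff_has_inverse.2 ⟨weight S (e y), fun v => ?_, fun w => ?_⟩
  · have := hS (e y) (T (ContinuousMap.const X v))
    rw [hST, e.symm_apply_apply] at this
    exact this.symm
  · have := hS (e y) (ContinuousMap.const Y w)
    rw [ContinuousMap.const_apply] at this
    rw [← this, ← hT, hTS]
    rfl

end

theorem strictly_biseparating_is_weighted_composition
    {𝕜 : Type*} [RCLike 𝕜]
    {N₁ N₂ : Type*} [NormedAddCommGroup N₁] [NormedSpace 𝕜 N₁] [Nontrivial N₁]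
    [NormedAddCommGroup N₂] [NormedSpace 𝕜 N₂] [Nontrivial N₂]
    {X₁ X₂ : Type*} [TopologicalSpace X₁] [CompactSpace X₁] [T2Space X₁]
    [TopologicalSpace X₂] [CompactSpace X₂] [T2Space X₂]
    (T : C(X₁, N₁) →ₗ[𝕜] C(X₂, N₂)) (hbij : Function.Bijective T)
    (hstrict : ∀ F₁ F₂ : C(X₁, N₁),
      (∀ x, ‖F₁ x‖ * ‖F₂ x‖ = 0) ↔ (∀ y, ‖T F₁ y‖ * ‖T F₂ y‖ = 0)) :
    ∃ (φ : X₂ ≃ₜ X₁) (J : X₂ → (N₁ →ₗ[𝕜] N₂)),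
      (∀ x, Function.Bijective (J x)) ∧
        ∀ (x : X₂) (F : C(X₁, N₁)), T F x = J x (F (φ x)) := by
  set S := (LinearEquiv.ofBijective T hbij).symm.toLinearMap
  have hST : LeftInverse S T := (LinearEquiv.ofBijective T hbij).symm_apply_apply
  have hTS : RightInverse S T := (LinearEquiv.ofBijective T hbij).apply_symm_apply
  simp only [forall_norm_mul_norm_eq_zero_iff_disjoint_support] at hstrict
  have hTsep : IsSeparating T := fun F G => (hstrict F G).1
  have hSsep : IsSeparating S := fun F G h => (hstrict (S F) (S G)).2 (by rwa [hTS, hTS])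
  choose φ hφ using exists_isSupportPoint hbij.2
  choose ψ hψ using exists_isSupportPoint hST.surjective
  let e : X₂ ≃ₜ X₁ :=
    { toFun := φ
      invFun := ψ
      left_inv := fun y => hTsep.eq_of_isSupportPoint_of_leftInverse hSsep hTS (hφ y) (hψ _)
      right_inv := fun x => hSsep.eq_of_isSupportPoint_of_leftInverse hTsep hST (hψ x) (hφ _)
      continuous_toFun := hTsep.continuous_of_isSupportPoint hφ
      continuous_invFun := hSsep.continuous_of_isSupportPoint hψ }
  have hT := apply_eq_weight_apply fun _ _ => hTsep.apply_eq_zero_of_apply_eq_zero e hφ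
  have hS := apply_eq_weight_apply fun _ _ => hSsep.apply_eq_zero_of_apply_eq_zero e.symm hψ
  exact ⟨e, weight T, bijective_weight hST hTS e hT hS, hT⟩
end
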